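/- arXiv:2304.11368 — 4 statements merged into one kernel-verified Lean document; each statement's English description precedes it below -/
import Mathlib

section
/- For the Bakhvalov-type mesh with x_i = -(σε/β)ln(1-2(1-ε)i/N), the step h_{x,N/2-2} = x_{N/2-1} - x_{N/2-2} satisfies h_{x,N/2-2} = (σε/β)·ln( (1-2(1-ε)(N/2-2)/N) / (1-2(1-ε)(N/2-1)/N) ), and this quantity lies between (σε/β)·ln(3/2) and (σε/β)·ln 2 when ε ≤ N^{-1} and N ≥ 8. -/
theorem stmt_5 (σ β ε : ℝ) (N : ℕ) (hσ : 0 < σ) (hβ : 0 < β)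
    (hN : 8 ≤ N) (hNe : Even N) (hε : 0 < ε) (hε1 : ε ≤ (N : ℝ)⁻¹)
    (x : ℕ → ℝ)
    (hx : ∀ i ≤ N / 2, x i = -(σ * ε / β) * Real.log (1 - 2 * (1 - ε) * (i : ℝ) / N)) :
    x (N / 2 - 1) - x (N / 2 - 2)
      = (σ * ε / β) * Real.log ((4 * (1 - ε) / N + ε) / (2 * (1 - ε) / N + ε)) ∧
    (σ * ε / β) * Real.log (3 / 2) ≤ x (N / 2 - 1) - x (N / 2 - 2) ∧
    x (N / 2 - 1) - x (N / 2 - 2) ≤ (σ * ε / β) * Real.log 2 := by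
  obtain ⟨M, hM⟩ := hNe
  have hM4 : 4 ≤ M := by omega
  have hdiv : N / 2 = M := by omega
  have hNR : (N : ℝ) = 2 * M := by rw [hM]; push_cast; ring
  have hMR : (4 : ℝ) ≤ M := by exact_mod_cast hM4
  have hNpos : (0 : ℝ) < N := by rw [hNR]; linarith
  have hN8 : (8 : ℝ) ≤ N := by exact_mod_cast hN
  have hεN : ε * N ≤ 1 := (le_div_iff₀ hNpos).mp (by rwa [inv_eq_one_div] at hε1)
  have hε8 : ε ≤ 1 / 8 := by
    nlinarith [mul_le_mul_of_nonneg_left hN8 hε.le]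
  have h1ε : (0 : ℝ) < 1 - ε := by linarith
  have h1 := hx (N / 2 - 1) (by omega)
  have h2 := hx (N / 2 - 2) (by omega)
  rw [hdiv] at h1 h2 ⊢
  have c1 : ((M - 1 : ℕ) : ℝ) = (M : ℝ) - 1 := by
    rw [Nat.cast_sub (by omega)]; norm_num
  have c2 : ((M - 2 : ℕ) : ℝ) = (M : ℝ) - 2 := by
    rw [Nat.cast_sub (by omega)]; norm_num
  rw [c1] at h1
  rw [c2] at h2
  have e1 : 1 - 2 * (1 - ε) * ((M : ℝ) - 1) / N = 2 * (1 - ε) / N + ε := by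
    field_simp [hNpos.ne']
    rw [hNR]; ring
  have e2 : 1 - 2 * (1 - ε) * ((M : ℝ) - 2) / N = 4 * (1 - ε) / N + ε := by
    field_simp [hNpos.ne']
    rw [hNR]; ring
  rw [e1] at h1
  rw [e2] at h2
  have hA : (0 : ℝ) < 2 * (1 - ε) / N + ε := by positivity
  have hB : (0 : ℝ) < 4 * (1 - ε) / N + ε := by positivity
  have hc : (0 : ℝ) < σ * ε / β := by positivity
  have hdiff : x (M - 1) - x (M - 2)
      = (σ * ε / β) * Real.log ((4 * (1 - ε) / N + ε) / (2 * (1 - ε) / N + ε)) := by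
    rw [h1, h2, Real.log_div hB.ne' hA.ne']
    ring
  refine ⟨hdiff, ?_, ?_⟩
  · rw [hdiff]
    apply mul_le_mul_of_nonneg_left _ hc.le
    apply Real.log_le_log (by norm_num)
    rw [le_div_iff₀ hA]
    have key : (0:ℝ) ≤ 2 * (1 - ε) - ε * N := by nlinarith
    have e3 : (4 * (1 - ε) / N + ε) - 3 / 2 * (2 * (1 - ε) / N + ε)
        = (2 * (1 - ε) - ε * N) / (2 * N) := by
      field_simp; ring
    have := div_nonneg key (by linarith : (0:ℝ) ≤ 2 * N)
    linarith
  · rw [hdiff]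
    apply mul_le_mul_of_nonneg_left _ hc.le
    have : (4 * (1 - ε) / N + ε) / (2 * (1 - ε) / N + ε) ≤ 2 := by
      rw [div_le_iff₀ hA]
      have e3 : 2 * (2 * (1 - ε) / N + ε) - (4 * (1 - ε) / N + ε) = ε := by
        field_simp; ring
      linarith
    calc Real.log ((4 * (1 - ε) / N + ε) / (2 * (1 - ε) / N + ε))
        ≤ Real.log 2 := Real.log_le_log (by positivity) this
end

section
/- For the Bakhvalov-type mesh with ε ≤ N^{-1} and N ≥ 4, the step h_{x,N/2-1} = x_{N/2} - x_{N/2-1} = (σε/β)·ln((2(1-ε)/N + ε)/ε) satisfies (σε/β)·ln(1/(Nε)) ≤ h_{x,N/2-1} ≤ (σε/β)·ln(3/(Nε)). -/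
theorem stmt_6 (σ β ε : ℝ) (N : ℕ) (hσ : 0 < σ) (hβ : 0 < β)
    (hN : 4 ≤ N) (hNe : Even N) (hε : 0 < ε) (hε1 : ε ≤ (N : ℝ)⁻¹) :
    (-(σ * ε / β) * Real.log ε) - (-(σ * ε / β) * Real.log (2 * (1 - ε) / N + ε))
      = (σ * ε / β) * Real.log ((2 * (1 - ε) / N + ε) / ε) ∧
    (σ * ε / β) * Real.log (1 / (N * ε)) ≤
      (-(σ * ε / β) * Real.log ε) - (-(σ * ε / β) * Real.log (2 * (1 - ε) / N + ε)) ∧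
    (-(σ * ε / β) * Real.log ε) - (-(σ * ε / β) * Real.log (2 * (1 - ε) / N + ε)) ≤
      (σ * ε / β) * Real.log (3 / (N * ε)) := by
  have hNpos : (0:ℝ) < N := by positivity
  have hN4 : (4:ℝ) ≤ N := by exact_mod_cast hN
  have hεle : ε ≤ 1 / 4 := le_trans hε1 (by rw [inv_eq_one_div]; gcongr)
  have hε1' : ε < 1 := lt_of_le_of_lt hεle (by norm_num)
  have hApos : 0 < 2 * (1 - ε) / N + ε := by
    have : 0 < 1 - ε := by linarith
    positivity
  have hc : 0 ≤ σ * ε / β := by positivity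
  have heq : (-(σ * ε / β) * Real.log ε) - (-(σ * ε / β) * Real.log (2 * (1 - ε) / N + ε))
      = (σ * ε / β) * Real.log ((2 * (1 - ε) / N + ε) / ε) := by
    rw [Real.log_div (ne_of_gt hApos) (ne_of_gt hε)]
    ring
  refine ⟨heq, ?_, ?_⟩
  · rw [heq]
    have hlog : Real.log (1 / (N * ε)) ≤ Real.log ((2 * (1 - ε) / N + ε) / ε) := by
      apply Real.log_le_log (by positivity)
      rw [div_le_div_iff₀ (by positivity) hε]
      have h1 : (1:ℝ)/N ≤ 2 * (1 - ε) / N + ε := by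
        rw [div_add' _ _ _ (ne_of_gt hNpos), div_le_div_iff₀ hNpos hNpos]
        nlinarith [mul_nonneg (mul_nonneg hε.le (by linarith : (0:ℝ) ≤ (N:ℝ)-2)) hNpos.le]
      calc 1 * ε = ε * N * (1/N) := by field_simp
        _ ≤ ε * N * (2 * (1 - ε) / N + ε) := by
            apply mul_le_mul_of_nonneg_left h1 (by positivity)
        _ = (2 * (1 - ε) / N + ε) * (N * ε) := by ring
    exact mul_le_mul_of_nonneg_left hlog hc
  · rw [heq]
    have hNε : (N:ℝ) * ε ≤ 1 := by
      calc (N:ℝ) * ε ≤ N * (N:ℝ)⁻¹ := by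
            apply mul_le_mul_of_nonneg_left hε1 (le_of_lt hNpos)
        _ = 1 := mul_inv_cancel₀ (ne_of_gt hNpos)
    have hlog : Real.log ((2 * (1 - ε) / N + ε) / ε) ≤ Real.log (3 / (N * ε)) := by
      apply Real.log_le_log (by positivity)
      rw [div_le_div_iff₀ hε (by positivity)]
      have h2 : 2 * (1 - ε) / N + ε ≤ 3/N := by
        rw [div_add' _ _ _ (ne_of_gt hNpos), div_le_div_iff₀ hNpos hNpos]
        nlinarith
      calc (2 * (1 - ε) / N + ε) * (N * ε) = (ε * N) * (2 * (1 - ε) / N + ε) := by ring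
        _ ≤ (ε * N) * (3/N) := mul_le_mul_of_nonneg_left h2 (by positivity)
        _ = 3 * ε := by field_simp
    exact mul_le_mul_of_nonneg_left hlog hc
end

section
/- On the Bakhvalov-type mesh, for 0 ≤ i ≤ N/2 - 2 and 0 ≤ ρ ≤ σ, the product h_{x,i}^ρ · exp(-β x_i / ε) is bounded by C ε^ρ N^{-ρ} for a constant C depending only on σ, β, ρ. -/
theorem stmt_8 (σ β ρ : ℝ) (hσ : 0 < σ) (hβ : 0 < β) (hρ0 : 0 ≤ ρ) (hρσ : ρ ≤ σ) :
    ∃ C > 0, ∀ (N : ℕ) (ε : ℝ), 8 ≤ N → Even N → 0 < ε → ε ≤ (N : ℝ)⁻¹ →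
      ∀ i : ℕ, i ≤ N / 2 - 2 →
        ((-(σ * ε / β) * Real.log (1 - 2 * (1 - ε) * ((i : ℝ) + 1) / N)) -
          (-(σ * ε / β) * Real.log (1 - 2 * (1 - ε) * (i : ℝ) / N))) ^ ρ *
          Real.exp (-β * (-(σ * ε / β) * Real.log (1 - 2 * (1 - ε) * (i : ℝ) / N)) / ε)
        ≤ C * ε ^ ρ * (N : ℝ) ^ (-ρ) := by
  refine ⟨(4 * σ / β) ^ ρ, Real.rpow_pos_of_pos (by positivity) ρ, ?_⟩
  intro N ε hN hEven hε hεN i hi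
  have hN0 : (0:ℝ) < N := by positivity
  have hN8 : (8:ℝ) ≤ N := by exact_mod_cast hN
  have hε1 : ε < 1 := lt_of_le_of_lt hεN (by
    rw [inv_lt_one_iff₀]; right; linarith)
  have h1e : (0:ℝ) ≤ 1 - ε := by linarith
  have h2i : 2 * (i + 1) ≤ N - 2 := by
    obtain ⟨k, hk⟩ := hEven; omega
  have h2iR : 2 * ((i:ℝ) + 1) ≤ (N:ℝ) - 2 := by
    have h2 : (2:ℕ) ≤ N := by omega
    have hc : ((2 * (i + 1) : ℕ) : ℝ) ≤ ((N - 2 : ℕ) : ℝ) := Nat.cast_le.mpr h2i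
    rw [Nat.cast_sub h2] at hc
    push_cast at hc
    linarith
  set u : ℝ := 1 - 2 * (1 - ε) * (i:ℝ) / N with hu_def
  set v : ℝ := 1 - 2 * (1 - ε) * ((i:ℝ) + 1) / N with hv_def
  have hvkey : 2 * (1 - ε) * ((i:ℝ) + 1) ≤ (N:ℝ) - 2 := by
    nlinarith [mul_nonneg hε.le (by positivity : (0:ℝ) ≤ (i:ℝ) + 1)]
  have hvN : 2 / (N:ℝ) ≤ v := by
    have h1 : 2 * (1 - ε) * ((i:ℝ) + 1) / N ≤ ((N:ℝ) - 2) / N :=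
      (div_le_div_iff_of_pos_right hN0).mpr hvkey
    have h2 : ((N:ℝ) - 2) / N = 1 - 2 / N := by field_simp
    rw [h2] at h1
    simp only [hv_def]
    linarith
  have hv0 : (0:ℝ) < v := lt_of_lt_of_le (by positivity) hvN
  have huv : u = v + 2 * (1 - ε) / N := by
    simp only [hu_def, hv_def]; ring
  have hdN : (0:ℝ) ≤ 2 * (1 - ε) / N := by positivity
  have hu0 : (0:ℝ) < u := by rw [huv]; exact add_pos_of_pos_of_nonneg hv0 hdN
  have hu1 : u ≤ 1 := by
    have : (0:ℝ) ≤ 2 * (1 - ε) * (i:ℝ) / N := by positivity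
    simp only [hu_def]; linarith
  have hdN2 : 2 * (1 - ε) / N ≤ 2 / N := by
    apply (div_le_div_iff_of_pos_right hN0).mpr; nlinarith
  have huv2 : u ≤ 2 * v := by rw [huv]; linarith
  have hvleu : v ≤ u := by rw [huv]; linarith
  -- log bound
  have hlognn : 0 ≤ Real.log u - Real.log v :=
    sub_nonneg.mpr (Real.log_le_log hv0 hvleu)
  have hlog : Real.log u - Real.log v ≤ u / v - 1 := by
    rw [← Real.log_div hu0.ne' hv0.ne']
    exact Real.log_le_sub_one_of_pos (by positivity)
  have hkey : (Real.log u - Real.log v) * u ≤ 4 / N := by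
    have h1 : (Real.log u - Real.log v) * u ≤ (u / v - 1) * u :=
      mul_le_mul_of_nonneg_right hlog hu0.le
    have h2 : (u / v - 1) * u = (u - v) * u / v := by
      field_simp
    have h3 : (u - v) * u ≤ (2 / N) * (2 * v) := by
      have huvN : u - v ≤ 2 / N := by rw [huv]; linarith
      exact mul_le_mul huvN huv2 hu0.le (by positivity)
    have h4 : (u - v) * u / v ≤ (2 / N) * (2 * v) / v :=
      (div_le_div_iff_of_pos_right hv0).mpr h3
    have h5 : (2 / N) * (2 * v) / v = 4 / N := by
      field_simp; ring
    rw [h2] at h1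
    rw [h5] at h4
    linarith
  set c : ℝ := σ * ε / β with hc_def
  have hc0 : 0 ≤ c := by positivity
  set h : ℝ := -(σ * ε / β) * Real.log v - -(σ * ε / β) * Real.log u with hh_def
  have hh : h = c * (Real.log u - Real.log v) := by rw [hh_def, hc_def]; ring
  have hh0 : 0 ≤ h := by rw [hh]; exact mul_nonneg hc0 hlognn
  have hhu : h * u ≤ 4 * σ * ε / (β * N) := by
    rw [hh, mul_assoc]
    have := mul_le_mul_of_nonneg_left hkey hc0
    calc c * ((Real.log u - Real.log v) * u) ≤ c * (4 / N) := this
      _ = 4 * σ * ε / (β * N) := by rw [hc_def]; field_simp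
  -- the exponential term
  have hexp : Real.exp (-β * (-(σ * ε / β) * Real.log u) / ε) = u ^ σ := by
    rw [show -β * (-(σ * ε / β) * Real.log u) / ε = Real.log u * σ by
      field_simp]
    rw [Real.rpow_def_of_pos hu0]
  rw [hexp]
  have huσρ : u ^ σ ≤ u ^ ρ := Real.rpow_le_rpow_of_exponent_ge hu0 hu1 hρσ
  have hhρ : (0:ℝ) ≤ h ^ ρ := Real.rpow_nonneg hh0 ρ
  have step1 : h ^ ρ * u ^ σ ≤ h ^ ρ * u ^ ρ := mul_le_mul_of_nonneg_left huσρ hhρ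
  have step2 : h ^ ρ * u ^ ρ = (h * u) ^ ρ := (Real.mul_rpow hh0 hu0.le).symm
  have step3 : (h * u) ^ ρ ≤ (4 * σ * ε / (β * N)) ^ ρ :=
    Real.rpow_le_rpow (mul_nonneg hh0 hu0.le) hhu hρ0
  have step4 : (4 * σ * ε / (β * N)) ^ ρ = (4 * σ / β) ^ ρ * ε ^ ρ * (N:ℝ) ^ (-ρ) := by
    have e1 : 4 * σ * ε / (β * N) = (4 * σ / β) * ε * (N:ℝ)⁻¹ := by
      field_simp
    rw [e1, Real.mul_rpow (by positivity) (by positivity),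
      Real.mul_rpow (by positivity) hε.le, Real.inv_rpow hN0.le,
      ← Real.rpow_neg hN0.le]
  calc h ^ ρ * u ^ σ ≤ h ^ ρ * u ^ ρ := step1
    _ = (h * u) ^ ρ := step2
    _ ≤ (4 * σ * ε / (β * N)) ^ ρ := step3
    _ = (4 * σ / β) ^ ρ * ε ^ ρ * (N:ℝ) ^ (-ρ) := step4
end

section
/- On the Bakhvalov-type mesh with σ ≥ 2, for 0 ≤ i ≤ N/2-2 the linear interpolation error of the layer function E(x) = exp(-βx/ε) satisfies ‖E - E^I‖_{L^∞([x_i, x_{i+1}])} ≤ C N^{-2}. -/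
lemma unit_interp (q s : ℝ) (hq : 0 < q) (hs0 : 0 ≤ s) (hs1 : s ≤ 1) :
    |q ^ s - (1 - s + s * q)| ≤ (1 - q) ^ 2 / q := by
  have h1 : q ^ s ≤ 1 - s + s * q := by
    have := Real.geom_mean_le_arith_mean2_weighted (by linarith : (0:ℝ) ≤ 1 - s) hs0
      zero_le_one hq.le (by ring)
    simpa using this
  have h2 : 1 + s * Real.log q ≤ q ^ s := by
    rw [Real.rpow_def_of_pos hq]
    have := Real.add_one_le_exp (Real.log q * s)
    linarith [this]
  have hlog : Real.log q ≤ q - 1 := Real.log_le_sub_one_of_pos hq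
  have hlog2 : -Real.log q ≤ 1/q - 1 := by
    have := Real.log_le_sub_one_of_pos (inv_pos.2 hq)
    rw [Real.log_inv] at this
    simpa [one_div] using this
  have hid : (1 - q) ^ 2 / q = 1/q - 2 + q := by field_simp; ring
  rw [abs_of_nonpos (by linarith), hid]
  have key : s * ((q - 1) - Real.log q) ≤ (q - 1) - Real.log q := by nlinarith
  nlinarith

set_option maxHeartbeats 1000000 in
theorem stmt_16 (σ β : ℝ) (hσ : 2 ≤ σ) (hβ : 0 < β) :
    ∃ C > 0, ∀ (N : ℕ) (ε : ℝ), 8 ≤ N → Even N → 0 < ε → ε ≤ (N : ℝ)⁻¹ →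
      ∀ i : ℕ, i ≤ N / 2 - 2 →
        ∀ t ∈ Set.Icc (-(σ * ε / β) * Real.log (1 - 2 * (1 - ε) * (i : ℝ) / N))
            (-(σ * ε / β) * Real.log (1 - 2 * (1 - ε) * ((i : ℝ) + 1) / N)),
          |Real.exp (-β * t / ε) -
            (Real.exp (-β * (-(σ * ε / β) * Real.log (1 - 2 * (1 - ε) * (i : ℝ) / N)) / ε) +
              (Real.exp (-β * (-(σ * ε / β) * Real.log (1 - 2 * (1 - ε) * ((i : ℝ) + 1) / N)) / ε) -
               Real.exp (-β * (-(σ * ε / β) * Real.log (1 - 2 * (1 - ε) * (i : ℝ) / N)) / ε)) *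
              (t - (-(σ * ε / β) * Real.log (1 - 2 * (1 - ε) * (i : ℝ) / N))) /
              ((-(σ * ε / β) * Real.log (1 - 2 * (1 - ε) * ((i : ℝ) + 1) / N)) -
               (-(σ * ε / β) * Real.log (1 - 2 * (1 - ε) * (i : ℝ) / N))))|
          ≤ C * (N : ℝ) ^ (-2 : ℝ) := by
  have hσ0 : (0:ℝ) < σ := by linarith
  refine ⟨4 * σ ^ 2 * (2:ℝ) ^ σ, by positivity, ?_⟩
  intro N ε hN hNeven hε hεN i hi t ht
  -- basic numeric facts
  have hN8 : (8:ℝ) ≤ N := by exact_mod_cast hN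
  have hNpos : (0:ℝ) < N := by linarith
  have hε1 : ε < 1 := by
    have h8 : (N:ℝ)⁻¹ ≤ 8⁻¹ := by
      apply inv_anti₀ (by norm_num) hN8
    linarith
  obtain ⟨k, hk⟩ := hNeven
  have hik : 2 * (i + 2) ≤ N := by omega
  have hre : 2 * ((i:ℝ) + 2) ≤ (N:ℝ) := by exact_mod_cast hik
  have hi0 : (0:ℝ) ≤ (i:ℝ) := Nat.cast_nonneg i
  clear hi hik hk hN hεN
  set u : ℝ := 1 - 2 * (1 - ε) * (i : ℝ) / N with hu_def
  set v : ℝ := 1 - 2 * (1 - ε) * ((i : ℝ) + 1) / N with hv_def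
  clear_value u v
  have huv : u - v = 2 * (1 - ε) / N := by
    rw [hu_def, hv_def]; field_simp; ring
  have huvN : 2 * (1 - ε) / (N:ℝ) ≤ 2 / N := by
    rw [div_le_div_iff_of_pos_right hNpos]; linarith
  have hu4 : 4 / (N:ℝ) ≤ u := by
    rw [div_le_iff₀ hNpos, hu_def]
    have expand : (1 - 2 * (1 - ε) * (i:ℝ)/N) * N = N - 2 * (1 - ε) * i := by
      field_simp
    rw [expand]; linarith [mul_nonneg hε.le hi0]
  have h2N : (0:ℝ) < 2 / N := by positivity
  have huv_pos : (0:ℝ) < 2 * (1 - ε) / N := div_pos (by linarith) hNpos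
  have h42 : (4:ℝ)/N = 2/N + 2/N := by ring
  have hv_pos : 0 < v := by linarith
  have hv_lt_u : v < u := by linarith
  have hu_pos : 0 < u := lt_trans hv_pos hv_lt_u
  have hu1 : u ≤ 1 := by
    rw [hu_def]
    have : 0 ≤ 2 * (1 - ε) * (i:ℝ) / N := div_nonneg
      (by linarith [mul_nonneg hε.le hi0, mul_nonneg (show (0:ℝ) ≤ 1 - ε by linarith) hi0]) hNpos.le
    linarith
  have h2v : u ≤ 2 * v := by linarith
  set a : ℝ := -(σ * ε / β) * Real.log u with ha_def
  set b : ℝ := -(σ * ε / β) * Real.log v with hb_def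
  clear_value a b
  have hc_neg : -(σ * ε / β) < 0 := by
    have : 0 < σ * ε / β := by positivity
    linarith
  have hab : a < b := by
    rw [ha_def, hb_def]
    exact mul_lt_mul_of_neg_left (Real.log_lt_log hv_pos hv_lt_u) hc_neg
  have hba : 0 < b - a := by linarith
  obtain ⟨hta, htb⟩ := ht
  set s : ℝ := (t - a) / (b - a) with hs_def
  clear_value s
  have hs0 : 0 ≤ s := by rw [hs_def]; exact div_nonneg (by linarith) hba.le
  have hs1 : s ≤ 1 := by
    rw [hs_def, div_le_one hba]; linarith
  have hts : t - a = s * (b - a) := by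
    rw [hs_def]; field_simp
  set q : ℝ := Real.exp (-β * (b - a) / ε) with hq_def
  clear_value q
  have hq_pos : 0 < q := hq_def ▸ Real.exp_pos _
  have hεne : ε ≠ 0 := ne_of_gt hε
  have hβne : β ≠ 0 := ne_of_gt hβ
  -- identities
  have hEa : Real.exp (-β * a / ε) = u ^ σ := by
    rw [Real.rpow_def_of_pos hu_pos]
    congr 1
    rw [ha_def]; field_simp
  have hEb : Real.exp (-β * b / ε) = Real.exp (-β * a / ε) * q := by
    rw [hq_def, ← Real.exp_add]
    congr 1
    field_simp; ring
  have hq_eq : q = (v / u) ^ σ := by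
    rw [Real.rpow_def_of_pos (div_pos hv_pos hu_pos), hq_def]
    congr 1
    rw [Real.log_div (ne_of_gt hv_pos) (ne_of_gt hu_pos), ha_def, hb_def]
    field_simp; ring
  have hEt : Real.exp (-β * t / ε) = Real.exp (-β * a / ε) * q ^ s := by
    have hqs : q ^ s = Real.exp (-β * (t - a) / ε) := by
      rw [hq_def, Real.rpow_def_of_pos (Real.exp_pos _), Real.log_exp]
      congr 1
      rw [hts]; ring
    rw [hqs, ← Real.exp_add]
    congr 1
    field_simp; ring
  -- rewrite the goal
  have hgoal_eq : Real.exp (-β * t / ε) - (Real.exp (-β * a / ε) +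
      (Real.exp (-β * b / ε) - Real.exp (-β * a / ε)) * (t - a) / (b - a)) =
      Real.exp (-β * a / ε) * (q ^ s - (1 - s + s * q)) := by
    rw [hEt, hEb, hs_def]
    field_simp
    ring
  rw [hgoal_eq, abs_mul, abs_of_pos (Real.exp_pos _)]
  -- apply unit lemma
  have hstep1 : Real.exp (-β * a / ε) * |q ^ s - (1 - s + s * q)| ≤
      Real.exp (-β * a / ε) * ((1 - q) ^ 2 / q) :=
    mul_le_mul_of_nonneg_left (unit_interp q s hq_pos hs0 hs1) (Real.exp_pos _).le
  -- final numeric estimate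
  set r : ℝ := v / u with hr_def
  clear_value r
  have hr_pos : 0 < r := by rw [hr_def]; exact div_pos hv_pos hu_pos
  have hr_le1 : r ≤ 1 := by
    rw [hr_def, div_le_one hu_pos]; linarith
  have hr_half : 1 / 2 ≤ r := by
    rw [hr_def, le_div_iff₀ hu_pos]; linarith
  have hq_eq' : q = r ^ σ := by rw [hq_eq, hr_def]
  have h1q : 1 - q ≤ σ * (1 - r) := by
    have hber := one_add_mul_self_le_rpow_one_add
      (show (-1:ℝ) ≤ r - 1 by linarith) (show (1:ℝ) ≤ σ by linarith)
    have h11 : (1:ℝ) + (r - 1) = r := by ring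
    rw [h11] at hber
    rw [hq_eq']
    linarith
  have h0q : 0 ≤ 1 - q := by
    have : q ≤ 1 := by
      rw [hq_eq']
      exact Real.rpow_le_one hr_pos.le hr_le1 (by linarith)
    linarith
  have hqinv : q⁻¹ ≤ (2:ℝ) ^ σ := by
    rw [show q⁻¹ = 1/q from (one_div q).symm, div_le_iff₀ hq_pos]
    have h2q : (2:ℝ) ^ σ * q = (2 * r) ^ σ := by
      rw [hq_eq', ← Real.mul_rpow (by norm_num) hr_pos.le]
    rw [h2q]
    calc (1:ℝ) = 1 ^ σ := (Real.one_rpow σ).symm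
    _ ≤ (2 * r) ^ σ := Real.rpow_le_rpow zero_le_one (by linarith) (by linarith)
  have h1r : 1 - r ≤ 2 / ((N:ℝ) * u) := by
    have hrr : 1 - r = (u - v) / u := by
      rw [hr_def]; field_simp
    rw [hrr, huv, show 2 / ((N:ℝ) * u) = (2 / N) / u from (div_div 2 _ _).symm]
    rw [div_le_div_iff_of_pos_right hu_pos]
    exact huvN
  have hu2 : u ^ σ ≤ u ^ (2:ℕ) := by
    have := Real.rpow_le_rpow_of_exponent_ge hu_pos hu1
      (show ((2:ℕ):ℝ) ≤ σ by exact_mod_cast hσ)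
    rwa [Real.rpow_natCast] at this
  have hN2 : (N:ℝ) ^ (-2:ℝ) = ((N:ℝ) ^ (2:ℕ))⁻¹ := by
    rw [show (-2:ℝ) = -((2:ℕ):ℝ) by norm_num, Real.rpow_neg hNpos.le, Real.rpow_natCast]
  have hfinal : u ^ σ * ((1 - q) ^ 2 / q) ≤ 4 * σ ^ 2 * (2:ℝ) ^ σ * (N:ℝ) ^ (-2:ℝ) := by
    have e2 : (1 - q) ^ 2 ≤ (σ * (2 / ((N:ℝ) * u))) ^ 2 := by
      apply pow_le_pow_left₀ h0q
      calc 1 - q ≤ σ * (1 - r) := h1q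
      _ ≤ σ * (2 / ((N:ℝ) * u)) := mul_le_mul_of_nonneg_left h1r hσ0.le
    have h2σpos : (0:ℝ) < (2:ℝ) ^ σ := Real.rpow_pos_of_pos (by norm_num) σ
    calc u ^ σ * ((1 - q) ^ 2 / q)
        = u ^ σ * (1 - q) ^ 2 * q⁻¹ := by ring
      _ ≤ u ^ (2:ℕ) * (σ * (2 / ((N:ℝ) * u))) ^ 2 * (2:ℝ) ^ σ := by
          apply mul_le_mul (mul_le_mul hu2 e2 (sq_nonneg _) (by positivity)) hqinv
            (inv_nonneg.2 hq_pos.le) (by positivity)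
      _ = 4 * σ ^ 2 * (2:ℝ) ^ σ * (N:ℝ) ^ (-2:ℝ) := by
          rw [hN2]; field_simp [hu_pos.ne', hNpos.ne']; ring
  calc Real.exp (-β * a / ε) * |q ^ s - (1 - s + s * q)|
      ≤ Real.exp (-β * a / ε) * ((1 - q) ^ 2 / q) := hstep1
    _ = u ^ σ * ((1 - q) ^ 2 / q) := by rw [hEa]
    _ ≤ 4 * σ ^ 2 * (2:ℝ) ^ σ * (N:ℝ) ^ (-2:ℝ) := hfinal
end
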